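/- Let R be a regular local ring of dimension n with maximal ideal m, and let x₁,…,xₙ be a regular system of parameters generating m. For any positive integers r₁,…,rₙ, the ring S = R[t₁,…,tₙ]/(t₁^{r₁}−x₁,…,tₙ^{rₙ}−xₙ) is a local ring. -/

import Mathlib

/-!
Write `tᵢ` for the image of `Xᵢ` in `S`. Since `tᵢ ^ rᵢ = xᵢ` with `rᵢ > 0`, `S` is integral over
`R`, so every maximal ideal of `S` lies over `m` and hence contains `mS`, whose radical contains
every `tᵢ`. On the other hand `S / (t₁, …, tₙ)` is the residue field `R / m`, because a polynomial
is congruent to its constant coefficient modulo the `Xᵢ`. So `(t₁, …, tₙ)` is a maximal ideal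
contained in every maximal ideal.
-/

open MvPolynomial IsLocalRing

theorem exists_isLocalRing_maximalIdeal_eq_of_isIntegral {R S : Type*} [CommRing R]
    [IsLocalRing R] [CommRing S] [Algebra R S] [Algebra.IsIntegral R S] (J : Ideal S)
    [hJmax : J.IsMaximal] (hJ : J ≤ ((maximalIdeal R).map (algebraMap R S)).radical) :
    ∃ _ : IsLocalRing S, maximalIdeal S = J := by
  have eq_of_isMaximal (M : Ideal S) (hM : M.IsMaximal) : M = J := by
    have hmM : (maximalIdeal R).map (algebraMap R S) ≤ M := by
      rw [Ideal.map_le_iff_le_comap,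
        ← eq_maximalIdeal (Ideal.isMaximal_comap_of_isIntegral_of_isMaximal M)]
    have hJM : J ≤ M := hJ.trans ((Ideal.radical_mono hmM).trans_eq hM.isPrime.radical)
    exact (hJmax.eq_of_le hM.ne_top hJM).symm
  have : IsLocalRing S := .of_unique_max_ideal ⟨J, hJmax, eq_of_isMaximal⟩
  exact ⟨this, eq_of_isMaximal _ (maximalIdeal.isMaximal S)⟩

namespace MvPolynomial

variable {σ R : Type*} [CommRing R]

theorem sub_C_constantCoeff_mem_span_range_X (p : MvPolynomial σ R) :
    p - C (constantCoeff p) ∈ Ideal.span (Set.range X) := by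
  induction p using MvPolynomial.induction_on with
  | C a => simp
  | add p q hp hq =>
    convert Ideal.add_mem _ hp hq using 1
    simp only [map_add]
    ring
  | mul_X p i _ =>
    simpa using Ideal.mul_mem_left _ p (Ideal.subset_span (Set.mem_range_self i))

noncomputable abbrev kummerIdeal (x : σ → R) (r : σ → ℕ) : Ideal (MvPolynomial σ R) :=
  Ideal.span (Set.range fun i => X i ^ r i - C (x i))

variable {x : σ → R} {r : σ → ℕ}

theorem mk_X_pow_eq_algebraMap (i : σ) :
    Ideal.Quotient.mk (kummerIdeal x r) (X i) ^ r i =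
      algebraMap R (MvPolynomial σ R ⧸ kummerIdeal x r) (x i) := by
  rw [← map_pow, ← Ideal.Quotient.mk_algebraMap, algebraMap_eq, Ideal.Quotient.eq]
  exact Ideal.subset_span ⟨i, rfl⟩

theorem span_mk_X_le_radical_map_maximalIdeal [IsLocalRing R]
    (hx : Ideal.span (Set.range x) = maximalIdeal R) :
    Ideal.span (Set.range fun i => Ideal.Quotient.mk (kummerIdeal x r) (X i)) ≤
      ((maximalIdeal R).map (algebraMap R (MvPolynomial σ R ⧸ kummerIdeal x r))).radical := by
  rw [Ideal.span_le]
  rintro _ ⟨i, rfl⟩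
  refine ⟨r i, ?_⟩
  rw [mk_X_pow_eq_algebraMap, ← hx]
  exact Ideal.mem_map_of_mem _ (Ideal.subset_span (Set.mem_range_self i))

theorem isIntegral_quotient_kummerIdeal (hr : ∀ i, r i ≠ 0) :
    Algebra.IsIntegral R (MvPolynomial σ R ⧸ kummerIdeal x r) := by
  have isIntegral_mk_X (i : σ) : IsIntegral R (Ideal.Quotient.mk (kummerIdeal x r) (X i)) :=
    ⟨Polynomial.X ^ r i - Polynomial.C (x i), Polynomial.monic_X_pow_sub_C _ (hr i),
      by simp [mk_X_pow_eq_algebraMap]⟩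
  refine ⟨fun s => ?_⟩
  obtain ⟨p, rfl⟩ := Ideal.Quotient.mk_surjective s
  induction p using MvPolynomial.induction_on with
  | C a => exact isIntegral_algebraMap
  | add p q hp hq => simpa using hp.add hq
  | mul_X p i hp => simpa using hp.mul (isIntegral_mk_X i)

section IsLocalRing

variable [IsLocalRing R] (hx : Ideal.span (Set.range x) = maximalIdeal R) (hr : ∀ i, r i ≠ 0)
include hx hr

theorem map_maximalIdeal_le_span_mk_X :
    (maximalIdeal R).map (algebraMap R (MvPolynomial σ R ⧸ kummerIdeal x r)) ≤
      Ideal.span (Set.range fun i => Ideal.Quotient.mk (kummerIdeal x r) (X i)) := by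
  rw [← hx, Ideal.map_span, Ideal.span_le]
  rintro _ ⟨_, ⟨i, rfl⟩, rfl⟩
  rw [← mk_X_pow_eq_algebraMap]
  exact Ideal.pow_mem_of_mem _ (Ideal.subset_span (Set.mem_range_self i)) _
    (Nat.pos_of_ne_zero (hr i))

theorem isMaximal_span_mk_X :
    (Ideal.span (Set.range fun i => Ideal.Quotient.mk (kummerIdeal x r) (X i))).IsMaximal := by
  set J := Ideal.span (Set.range fun i => Ideal.Quotient.mk (kummerIdeal x r) (X i))
  set M := (maximalIdeal R).comap (constantCoeff : MvPolynomial σ R →+* R)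
  have hM : M.IsMaximal :=
    Ideal.comap_isMaximal_of_surjective _ fun a => ⟨C a, constantCoeff_C σ a⟩
  have hker : RingHom.ker (Ideal.Quotient.mk (kummerIdeal x r)) ≤ M := by
    rw [Ideal.mk_ker, Ideal.span_le]
    rintro _ ⟨i, rfl⟩
    simpa [M, zero_pow (hr i)] using (hx ▸ Ideal.subset_span ⟨i, rfl⟩ : x i ∈ maximalIdeal R)
  suffices J = M.map (Ideal.Quotient.mk _) from
    this ▸ hM.map_of_surjective_of_ker_le Ideal.Quotient.mk_surjective hker
  refine le_antisymm (Ideal.span_le.2 ?_) (Ideal.map_le_iff_le_comap.2 fun p hp => ?_)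
  · rintro _ ⟨i, rfl⟩
    exact Ideal.mem_map_of_mem _ (by simp [M])
  · have hconst : algebraMap R _ (constantCoeff p) ∈ J :=
      map_maximalIdeal_le_span_mk_X hx hr (Ideal.mem_map_of_mem _ hp)
    have hnonconst : Ideal.Quotient.mk (kummerIdeal x r) (p - C (constantCoeff p)) ∈ J := by
      have := Ideal.mem_map_of_mem (Ideal.Quotient.mk (kummerIdeal x r))
        (sub_C_constantCoeff_mem_span_range_X p)
      rwa [Ideal.map_span, ← Set.range_comp] at this
    rw [Ideal.mem_comap]
    convert Ideal.add_mem _ hconst hnonconst using 1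
    rw [map_sub, ← algebraMap_eq, Ideal.Quotient.mk_algebraMap]
    ring

end IsLocalRing

end MvPolynomial

open MvPolynomial in
theorem kummer_cover_of_regular_local_isLocalRing_general {R : Type*} [CommRing R]
    [IsLocalRing R] (n : ℕ)
    (x : Fin n → R) (hx : Ideal.span (Set.range x) = IsLocalRing.maximalIdeal R)
    (r : Fin n → ℕ) (hr : ∀ i, 0 < r i) :
    ∃ _ : IsLocalRing (MvPolynomial (Fin n) R ⧸
        Ideal.span (Set.range fun i : Fin n => (X i) ^ r i - C (x i))),
      IsLocalRing.maximalIdeal (MvPolynomial (Fin n) R ⧸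
          Ideal.span (Set.range fun i : Fin n => (X i) ^ r i - C (x i))) =
        Ideal.span (Set.range fun i : Fin n =>
          (Ideal.Quotient.mk (Ideal.span (Set.range fun i : Fin n => (X i) ^ r i - C (x i))))
            (X i)) := by
  have hr' (i : Fin n) : r i ≠ 0 := (hr i).ne'
  have := isIntegral_quotient_kummerIdeal (x := x) hr'
  have := isMaximal_span_mk_X hx hr'
  exact exists_isLocalRing_maximalIdeal_eq_of_isIntegral _
    (span_mk_X_le_radical_map_maximalIdeal hx)

open MvPolynomial in
/-- Let `R` be a regular local ring of dimension `n` with maximal ideal `m` generated by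
a regular system of parameters `x₁, …, xₙ`.  For positive integers `r₁, …, rₙ`, the ring
`S = R[t₁,…,tₙ]/(t₁^{r₁} − x₁, …, tₙ^{rₙ} − xₙ)` is a local ring, with unique maximal
ideal generated by the images of the `tᵢ`'s. -/
theorem kummer_cover_of_regular_local_isLocalRing {R : Type*} [CommRing R]
    [IsNoetherianRing R] [IsLocalRing R] (n : ℕ) (hdim : ringKrullDim R = n)
    (x : Fin n → R) (hx : Ideal.span (Set.range x) = IsLocalRing.maximalIdeal R)
    (r : Fin n → ℕ) (hr : ∀ i, 0 < r i) :
    ∃ _ : IsLocalRing (MvPolynomial (Fin n) R ⧸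
        Ideal.span (Set.range fun i : Fin n => (X i) ^ r i - C (x i))),
      IsLocalRing.maximalIdeal (MvPolynomial (Fin n) R ⧸
          Ideal.span (Set.range fun i : Fin n => (X i) ^ r i - C (x i))) =
        Ideal.span (Set.range fun i : Fin n =>
          (Ideal.Quotient.mk (Ideal.span (Set.range fun i : Fin n => (X i) ^ r i - C (x i))))
            (X i)) :=
  kummer_cover_of_regular_local_isLocalRing_general n x hx r hr
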